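/- Let α: S → T and β: T → U be surjective homomorphisms of finite semigroups. If β ∘ α is injective on every regular R-class of S, then β is injective on every regular R-class of T. (Together with the easy converse direction, composition of 1:1regR maps is 1:1regR.) -/

import Mathlib

/-- Green's R-preorder: `a ≤_R b` iff `a S¹ ⊆ b S¹`. -/
def rLe {S : Type*} [Semigroup S] (a b : S) : Prop := a = b ∨ ∃ x, a = b * x

/-- Green's R-equivalence. -/
def rEquiv {S : Type*} [Semigroup S] (a b : S) : Prop := rLe a b ∧ rLe b a

/-! Work in the finite subsemigroup `α⁻¹(e)` of `S`. Writing `t₁ = e * t₁`, `e = t₁ * q`,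
`t₂ = t₁ * v`, `t₁ = t₂ * u` and lifting `t₁, q, v, u` to `x, q₀, v₀, u₀`, the element
`b = x * v₀ * u₀ * q₀` lies in `α⁻¹(e)`, and an idempotent `g` of the finite subsemigroup
`α⁻¹(e) ∩ b S¹` satisfies `g ≤_R g * b`. Then `s₁ = g * x * v₀ * u₀` and `s₂ = g * x * v₀` are
`R`-equivalent to `g` and lift `t₁` and `t₂`, so injectivity of `β ∘ α` on the regular `R`-class
of `g` gives `t₁ = t₂`. -/

section GreenR

variable {S : Type*} [Semigroup S] {a b c : S}

theorem rLe_refl (a : S) : rLe a a := Or.inl rfl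

theorem rLe_mul_right (a c : S) : rLe (a * c) a := Or.inr ⟨c, rfl⟩

theorem rLe.trans (hab : rLe a b) (hbc : rLe b c) : rLe a c := by
  rcases hab with rfl | ⟨x, rfl⟩
  · exact hbc
  rcases hbc with rfl | ⟨y, rfl⟩
  · exact rLe_mul_right _ _
  · exact Or.inr ⟨y * x, mul_assoc _ _ _⟩

theorem rLe.mul_right (h : rLe a b) (c : S) : rLe (a * c) b :=
  (rLe_mul_right a c).trans h

theorem rLe.mul_left (h : rLe a b) (c : S) : rLe (c * a) (c * b) := by
  rcases h with rfl | ⟨x, rfl⟩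
  · exact rLe_refl _
  · exact Or.inr ⟨x, (mul_assoc _ _ _).symm⟩

theorem rLe.exists_eq_mul (h : rLe a b) (hb : ∃ c, b * c = b) : ∃ x, a = b * x := by
  rcases h with rfl | hx
  · exact hb.imp fun _ hc ↦ hc.symm
  · exact hx

theorem rEquiv.exists_mul_eq_self (h : rEquiv a b) (ha : ∃ c, a * c = a) :
    ∃ c, b * c = b := by
  obtain ⟨x, rfl⟩ := h.2.exists_eq_mul ha
  rcases h.1 with h | ⟨y, hy⟩
  · exact ⟨x, by rw [← h, ← h]⟩
  · exact ⟨y * x, by rw [← mul_assoc, ← hy]⟩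

end GreenR

theorem exists_idempotent_of_finite {M : Type*} [Semigroup M] [Finite M] (s : Set M)
    (hs : s.Nonempty) (hmul : ∀ x ∈ s, ∀ y ∈ s, x * y ∈ s) : ∃ m ∈ s, m * m = m := by
  let : TopologicalSpace M := ⊥
  have : DiscreteTopology M := ⟨rfl⟩
  exact exists_idempotent_in_compact_subsemigroup (fun _ ↦ continuous_of_discreteTopology) s hs
    s.toFinite.isCompact hmul

theorem exists_idempotent_rLe_mul {M : Type*} [Semigroup M] [Finite M] (s : Set M)
    (hmul : ∀ x ∈ s, ∀ y ∈ s, x * y ∈ s) {b : M} (hb : b ∈ s) :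
    ∃ g ∈ s, g * g = g ∧ rLe g (g * b) := by
  obtain ⟨g, ⟨hgs, hgb⟩, hg⟩ := exists_idempotent_of_finite (s ∩ {z | rLe z b})
    ⟨b, hb, rLe_refl b⟩ fun x hx y hy ↦ ⟨hmul x hx.1 y hy.1, hx.2.mul_right y⟩
  exact ⟨g, hgs, hg, by simpa only [hg] using hgb.mul_left g⟩

theorem exists_rEquiv_lift_of_regular {S T : Type*} [Semigroup S] [Finite S] [Semigroup T]
    (α : S →ₙ* T) (hα : Function.Surjective α) {e t₁ t₂ : T} (he : e * e = e)
    (he₁ : rEquiv e t₁) (h₁₂ : rEquiv t₁ t₂) :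
    ∃ s₁ s₂ : S, (∃ g : S, g * g = g ∧ rEquiv g s₁) ∧ rEquiv s₁ s₂ ∧ α s₁ = t₁ ∧ α s₂ = t₂ := by
  have hre : ∃ c, e * c = e := ⟨e, he⟩
  have hr₁ := he₁.exists_mul_eq_self hre
  have het₁ : e * t₁ = t₁ := by
    obtain ⟨p, hp⟩ := he₁.2.exists_eq_mul hre
    rw [hp, ← mul_assoc, he]
  obtain ⟨q, hq⟩ := he₁.1.exists_eq_mul hr₁
  obtain ⟨v, hv⟩ := h₁₂.2.exists_eq_mul hr₁
  obtain ⟨u, hu⟩ := h₁₂.1.exists_eq_mul (h₁₂.exists_mul_eq_self hr₁)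
  obtain ⟨x, rfl⟩ := hα t₁
  obtain ⟨q₀, rfl⟩ := hα q
  obtain ⟨v₀, rfl⟩ := hα v
  obtain ⟨u₀, rfl⟩ := hα u
  have hb : α (x * v₀ * u₀ * q₀) = e := by simp only [map_mul, ← hv, ← hu, ← hq]
  obtain ⟨g, hge : α g = e, hg, hgb⟩ := exists_idempotent_rLe_mul {z | α z = e}
    (fun y (hy : α y = e) z (hz : α z = e) ↦ by simp only [Set.mem_ofPred_eq, map_mul, hy, hz, he])
    hb
  have hgs₁ : rLe g (g * x * v₀ * u₀) := by
    rw [show g * (x * v₀ * u₀ * q₀) = g * x * v₀ * u₀ * q₀ by simp only [mul_assoc]] at hgb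
    exact hgb.trans (rLe_mul_right _ q₀)
  have hs₁g : rLe (g * x * v₀ * u₀) g := by
    simpa only [mul_assoc] using rLe_mul_right g (x * (v₀ * u₀))
  refine ⟨g * x * v₀ * u₀, g * x * v₀, ⟨g, hg, hgs₁, hs₁g⟩, ⟨rLe_mul_right _ _, ?_⟩, ?_, ?_⟩
  · exact ((rLe_mul_right g x).mul_right v₀).trans hgs₁
  · simp only [map_mul, hge, het₁, ← hv, ← hu]
  · simp only [map_mul, hge, het₁, ← hv]

theorem stmt16_general {S T U : Type*} [Semigroup S] [Fintype S] [Semigroup T]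
    (α : S → T) (hα : ∀ a b : S, α (a * b) = α a * α b) (hαs : Function.Surjective α)
    (β : T → U)
    (hcomp : ∀ s₁ s₂ : S, (∃ e : S, e * e = e ∧ rEquiv e s₁) →
      rEquiv s₁ s₂ → β (α s₁) = β (α s₂) → s₁ = s₂) :
    ∀ t₁ t₂ : T, (∃ e : T, e * e = e ∧ rEquiv e t₁) →
      rEquiv t₁ t₂ → β t₁ = β t₂ → t₁ = t₂ := by
  rintro t₁ t₂ ⟨e, he, he₁⟩ h₁₂ hβ
  obtain ⟨s₁, s₂, hreg, hs₁₂, rfl, rfl⟩ :=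
    exists_rEquiv_lift_of_regular ⟨α, hα⟩ hαs he he₁ h₁₂
  exact congrArg α (hcomp s₁ s₂ hreg hs₁₂ hβ)

theorem stmt16 {S T U : Type*} [Semigroup S] [Fintype S] [Semigroup T] [Fintype T]
    [Semigroup U] [Fintype U]
    (α : S → T) (hα : ∀ a b : S, α (a * b) = α a * α b) (hαs : Function.Surjective α)
    (β : T → U) (hβ : ∀ a b : T, β (a * b) = β a * β b) (hβs : Function.Surjective β)
    (hcomp : ∀ s₁ s₂ : S, (∃ e : S, e * e = e ∧ rEquiv e s₁) →
      rEquiv s₁ s₂ → β (α s₁) = β (α s₂) → s₁ = s₂) :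
    ∀ t₁ t₂ : T, (∃ e : T, e * e = e ∧ rEquiv e t₁) →
      rEquiv t₁ t₂ → β t₁ = β t₂ → t₁ = t₂ :=
  stmt16_general α hα hαs β hcomp
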